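/- If W ∈ ℝ^{n×n} has at most r distinct rows and A ∈ ℝ^{n×n} is arbitrary, then for any Z ∈ ℝ^{k×n}, there exists a minimizer U* of U ↦ ‖(UZ − A) ∘ W‖_F² such that U* has at most r·p distinct rows, where p is such that W ∘ A has at most r·p distinct rows. More precisely: if rows ℓ₁, ℓ₂ satisfy W_{ℓ₁,*} = W_{ℓ₂,*} and (W ∘ A)_{ℓ₁,*} = (W ∘ A)_{ℓ₂,*}, one can choose U* with (U*)_{ℓ₁,*} = (U*)_{ℓ₂,*}. -/

import Mathlib

/-!
The objective splits as a sum over rows, and the `i`-th summand is a least-squares problem in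
`U i` whose data are only `W i` and `(W ⊙ A) i`. Choosing the row minimizer as a function of that
data gives a global minimizer whose rows agree wherever the data do.
-/

open scoped Matrix

noncomputable def frobSq {n m : ℕ} (M : Matrix (Fin n) (Fin m) ℝ) : ℝ :=
  ∑ i, ∑ j, (M i j) ^ 2

theorem LinearMap.exists_forall_norm_sub_le {E F : Type*} [AddCommGroup E] [Module ℝ E]
    [NormedAddCommGroup F] [NormedSpace ℝ F] [FiniteDimensional ℝ F] (T : E →ₗ[ℝ] F) (c : F) :
    ∃ x, ∀ y, ‖T x - c‖ ≤ ‖T y - c‖ := by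
  obtain ⟨_, ⟨x, rfl⟩, hx⟩ :=
    (LinearMap.range T).closed_of_finiteDimensional.exists_infDist_eq_dist
      ⟨0, (LinearMap.range T).zero_mem⟩ c
  refine ⟨x, fun y => ?_⟩
  rw [← dist_eq_norm, ← dist_eq_norm, dist_comm, ← hx, dist_comm]
  exact Metric.infDist_le_dist_of_mem ⟨y, rfl⟩

def rowLoss {n k : ℕ} (Z : Matrix (Fin k) (Fin n) ℝ) (w b : Fin n → ℝ) (u : Fin k → ℝ) : ℝ :=
  ∑ j, ((u ᵥ* Z) j * w j - b j) ^ 2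

theorem frobSq_hadamard_eq_sum_rowLoss {n k : ℕ} (U : Matrix (Fin n) (Fin k) ℝ)
    (Z : Matrix (Fin k) (Fin n) ℝ) (A W : Matrix (Fin n) (Fin n) ℝ) :
    frobSq ((U * Z - A) ⊙ W) = ∑ i, rowLoss Z (W i) (W i * A i) (U i) := by
  unfold frobSq rowLoss
  congr! 2 with i - j -
  simp only [Matrix.hadamard_apply, Matrix.sub_apply, Matrix.mul_apply_eq_vecMul, Pi.mul_apply]
  ring

theorem exists_forall_rowLoss_le {n k : ℕ} (Z : Matrix (Fin k) (Fin n) ℝ) (w b : Fin n → ℝ) :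
    ∃ u, ∀ v, rowLoss Z w b u ≤ rowLoss Z w b v := by
  let T : (Fin k → ℝ) →ₗ[ℝ] EuclideanSpace ℝ (Fin n) :=
    { toFun u := WithLp.toLp 2 ((u ᵥ* Z) * w)
      map_add' x y := by ext j; simp [Matrix.add_vecMul, add_mul]
      map_smul' c x := by ext j; simp [Matrix.smul_vecMul, mul_assoc] }
  have hT : ∀ u, rowLoss Z w b u = ‖T u - WithLp.toLp 2 b‖ ^ 2 := fun u => by
    simp [rowLoss, EuclideanSpace.norm_sq_eq, T]
  obtain ⟨u, hu⟩ := T.exists_forall_norm_sub_le (WithLp.toLp 2 b)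
  exact ⟨u, fun v => by rw [hT, hT]; gcongr; exact hu v⟩

theorem stmt_5 (n k : ℕ) (A W : Matrix (Fin n) (Fin n) ℝ) (Z : Matrix (Fin k) (Fin n) ℝ) :
    ∃ Ustar : Matrix (Fin n) (Fin k) ℝ,
      (∀ U : Matrix (Fin n) (Fin k) ℝ,
        frobSq (Matrix.hadamard (Ustar * Z - A) W)
          ≤ frobSq (Matrix.hadamard (U * Z - A) W)) ∧
      (∀ ℓ₁ ℓ₂ : Fin n, W ℓ₁ = W ℓ₂ →
        (fun j => W ℓ₁ j * A ℓ₁ j) = (fun j => W ℓ₂ j * A ℓ₂ j) →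
        Ustar ℓ₁ = Ustar ℓ₂) := by
  choose u hu using fun wb : (Fin n → ℝ) × (Fin n → ℝ) => exists_forall_rowLoss_le Z wb.1 wb.2
  refine ⟨Matrix.of fun i => u (W i, W i * A i), fun U => ?_, fun ℓ₁ ℓ₂ hW hWA => ?_⟩
  · rw [frobSq_hadamard_eq_sum_rowLoss, frobSq_hadamard_eq_sum_rowLoss]
    exact Finset.sum_le_sum fun i _ => hu _ (U i)
  · exact congrArg u (Prod.ext hW hWA)
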